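/- Let G be a 2-connected graph and let x be a vertex of G. Then there exist two distinct neighbors s1 and s2 of x such that for each i ∈ {1,2}, the graph G − {x, s_i} (obtained by deleting the vertices x and s_i and all incident edges) is connected. -/

import Mathlib

open SimpleGraph

/-- `P` is a `Λ`-factor of the graph `G`: a collection of ordered triples, each of
which is a 3-vertex path of `G` (the first and third entries being the endpoints),
such that every vertex of `G` lies in exactly one triple. -/
def IsLambdaFactor {V : Type*} (G : SimpleGraph V) (P : Set (V × V × V)) : Prop :=
  (∀ p ∈ P, G.Adj p.1 p.2.1 ∧ G.Adj p.2.1 p.2.2 ∧ p.1 ≠ p.2.2) ∧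
  ∀ v : V, ∃! p : V × V × V, p ∈ P ∧ (v = p.1 ∨ v = p.2.1 ∨ v = p.2.2)

/-- `G` has a `Λ`-factor: a spanning collection of pairwise disjoint 3-vertex paths. -/
def HasLambdaFactor {V : Type*} (G : SimpleGraph V) : Prop :=
  ∃ P, IsLambdaFactor G P

/-- `G` is claw-free: it has no induced subgraph isomorphic to `K_{1,3}`. -/
def ClawFree {V : Type*} (G : SimpleGraph V) : Prop :=
  ∀ x a b c : V, G.Adj x a → G.Adj x b → G.Adj x c →
    a ≠ b → a ≠ c → b ≠ c →
    ¬ G.Adj a b → ¬ G.Adj a c → ¬ G.Adj b c → False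

/-- `G` is `k`-connected: it has more than `k` vertices and removing any fewer than
`k` vertices leaves it connected. -/
def KConnected {V : Type*} (k : ℕ) (G : SimpleGraph V) : Prop :=
  k < Nat.card V ∧ ∀ S : Set V, S.ncard < k → (G.induce Sᶜ).Connected

/-- `G` is cubic: every vertex has degree 3. -/
def CubicGraph {V : Type*} (G : SimpleGraph V) : Prop :=
  ∀ v : V, (G.neighborSet v).ncard = 3

/-- The graph `F^Δ` obtained from `F` by replacing every vertex by a triangle.
Its vertices are the darts of `F`; two darts are adjacent iff they have the same
tail (the triangle edges) or are reverses of each other (the original edges). -/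
def TriangleReplacement {V : Type*} (F : SimpleGraph V) : SimpleGraph F.Dart where
  Adj d d' := d ≠ d' ∧ (d.toProd.1 = d'.toProd.1 ∨ d' = d.symm)
  symm := by
    constructor
    rintro d d' ⟨hne, h | h⟩
    · exact ⟨hne.symm, Or.inl h.symm⟩
    · subst h
      exact ⟨hne.symm, Or.inr (SimpleGraph.Dart.symm_symm d).symm⟩
  loopless := ⟨fun d h => h.1 rfl⟩

/-!
Let `H = G - x`. By 2-connectivity every component of `H - s` (for any `s ≠ x`) contains a
neighbour `t` of `x`, since `G - s` is connected. If `H - t` is disconnected, one of its components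
`D` misses `s`; as `H` is connected, `D` is attached to `t`, so `D` lies inside the component
`C ∋ t` of `H - s` and misses `t`, i.e. `D ⊊ C`. Descending on `|C|` yields a neighbour `t`
with `H - t` connected; restarting from `s := t` yields a second one.
-/

lemma Set.nonempty_compl_of_ncard_lt {V : Type*} {S : Set V} (h : S.ncard < Nat.card V) :
    Sᶜ.Nonempty := by
  rw [Set.nonempty_compl]
  rintro rfl
  simp at h

namespace SimpleGraph

variable {V : Type*} {G : SimpleGraph V}

def ReachableIn (G : SimpleGraph V) (A : Set V) (u v : V) : Prop :=
  ∃ p : G.Walk u v, ∀ z ∈ p.support, z ∈ A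

namespace ReachableIn

variable {A B : Set V} {u v w : V}

lemma refl (hu : u ∈ A) : G.ReachableIn A u u :=
  ⟨.nil, by simpa using hu⟩

lemma of_adj (h : G.Adj u v) (hu : u ∈ A) (hv : v ∈ A) : G.ReachableIn A u v :=
  ⟨.cons h .nil, by simp [hu, hv]⟩

lemma symm (h : G.ReachableIn A u v) : G.ReachableIn A v u := by
  obtain ⟨p, hp⟩ := h
  exact ⟨p.reverse, fun z hz => hp z (by simpa using hz)⟩

lemma trans (h : G.ReachableIn A u v) (h' : G.ReachableIn A v w) : G.ReachableIn A u w := by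
  obtain ⟨p, hp⟩ := h
  obtain ⟨q, hq⟩ := h'
  refine ⟨p.append q, fun z hz => ?_⟩
  rcases Walk.mem_support_append_iff p q |>.1 hz with hz | hz
  exacts [hp z hz, hq z hz]

lemma left_mem (h : G.ReachableIn A u v) : u ∈ A := by
  obtain ⟨p, hp⟩ := h
  exact hp u p.start_mem_support

lemma right_mem (h : G.ReachableIn A u v) : v ∈ A :=
  h.symm.left_mem

lemma mono (hAB : A ⊆ B) (h : G.ReachableIn A u v) : G.ReachableIn B u v := by
  obtain ⟨p, hp⟩ := h
  exact ⟨p, fun z hz => hAB (hp z hz)⟩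

lemma diff_singleton {s : V} (h : G.ReachableIn A u v) (hs : ¬ G.ReachableIn A u s) :
    G.ReachableIn (A \ {s}) u v := by
  classical
  obtain ⟨p, hp⟩ := h
  refine ⟨p, fun z hz => ⟨hp z hz, ?_⟩⟩
  rintro rfl
  exact hs ⟨p.takeUntil z hz, fun y hy => hp y (p.support_takeUntil_subset_support hz hy)⟩

end ReachableIn

lemma reachableIn_of_connected_induce {A : Set V} (h : (G.induce A).Connected) {u v : V}
    (hu : u ∈ A) (hv : v ∈ A) : G.ReachableIn A u v := by
  obtain ⟨p⟩ := h.preconnected ⟨u, hu⟩ ⟨v, hv⟩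
  have hp : ∀ z ∈ (p.map (Embedding.induce A).toHom).support, z ∈ A := by
    intro z hz
    rw [Walk.support_map, List.mem_map] at hz
    obtain ⟨y, -, rfl⟩ := hz
    exact y.2
  exact ⟨_, hp⟩

lemma connected_induce_of_forall_reachableIn {A : Set V} {s : V} (hs : s ∈ A)
    (h : ∀ v ∈ A, G.ReachableIn A v s) : (G.induce A).Connected := by
  refine connected_iff_exists_forall_reachable _ |>.2 ⟨⟨s, hs⟩, fun ⟨v, hv⟩ => ?_⟩
  obtain ⟨p, hp⟩ := h v hv
  exact (p.induce A hp).reachable.symm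

lemma Walk.exists_reachableIn_adj_notMem {A : Set V} {u v : V} (p : G.Walk u v) (hu : u ∈ A)
    (hv : v ∉ A) : ∃ a b, G.ReachableIn A u a ∧ G.Adj a b ∧ b ∉ A ∧ b ∈ p.support := by
  induction p with
  | nil => exact absurd hu hv
  | @cons u w v huw q ih =>
    by_cases hw : w ∈ A
    · obtain ⟨a, b, hwa, hab, hb, hbq⟩ := ih hw hv
      exact ⟨a, b, (ReachableIn.of_adj huw hu hw).trans hwa, hab, hb, by simp [hbq]⟩
    · exact ⟨u, w, .refl hu, huw, hw, by simp⟩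

lemma exists_adj_reachableIn_pair_compl {s x u : V} (hs : (G.induce ({s}ᶜ : Set V)).Connected)
    (hxs : x ≠ s) (hu : u ∈ ({x, s}ᶜ : Set V)) :
    ∃ t, G.Adj t x ∧ G.ReachableIn {x, s}ᶜ u t := by
  have hus : u ≠ s := fun h => hu (by simp [h])
  obtain ⟨p, hp⟩ := reachableIn_of_connected_induce hs hus hxs
  obtain ⟨a, b, hua, hab, hb, hbp⟩ := p.exists_reachableIn_adj_notMem hu (by simp)
  have hbx : b = x := by
    by_contra hbx
    exact hb (by simpa [hbx] using hp b hbp)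
  exact ⟨a, hbx ▸ hab, hua⟩

theorem exists_adj_reachableIn_connected_induce_pair_compl [Finite V]
    (hG : ∀ v, (G.induce ({v}ᶜ : Set V)).Connected) {x s u : V} (hxs : x ≠ s)
    (hu : u ∈ ({x, s}ᶜ : Set V)) :
    ∃ t, G.Adj x t ∧ G.ReachableIn {x, s}ᶜ u t ∧ (G.induce ({x, t}ᶜ : Set V)).Connected := by
  obtain ⟨t, htx, hut⟩ := exists_adj_reachableIn_pair_compl (hG s) hxs hu
  by_cases hct : (G.induce ({x, t}ᶜ : Set V)).Connected
  · exact ⟨t, htx.symm, hut, hct⟩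
  have ht : t ∈ ({x, s}ᶜ : Set V) := hut.right_mem
  have hs : s ∈ ({x, t}ᶜ : Set V) := by
    simp only [Set.mem_compl_iff, Set.mem_insert_iff, Set.mem_singleton_iff, not_or] at ht ⊢
    exact ⟨hxs.symm, Ne.symm ht.2⟩
  obtain ⟨v, hv, hvs⟩ : ∃ v ∈ ({x, t}ᶜ : Set V), ¬ G.ReachableIn {x, t}ᶜ v s := by
    by_contra! h
    exact hct (connected_induce_of_forall_reachableIn hs h)
  have hD : ∀ z, G.ReachableIn {x, t}ᶜ v z → G.ReachableIn {x, s}ᶜ v z := fun z hz =>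
    (hz.diff_singleton hvs).mono fun y hy => by simp_all
  obtain ⟨z, hzt, hvz⟩ := exists_adj_reachableIn_pair_compl (hG x) htx.ne
    (Set.pair_comm x t ▸ hv)
  rw [Set.pair_comm t x] at hvz
  have hDC : {z | G.ReachableIn {x, t}ᶜ v z} ⊂ {z | G.ReachableIn {x, s}ᶜ u z} := by
    refine Set.ssubset_iff_of_subset (fun y hy => ?_) |>.2 ⟨t, hut, fun h => h.right_mem (by simp)⟩
    exact hut.trans <| (ReachableIn.of_adj hzt.symm ht (hD z hvz).right_mem).trans <|
      (hD z hvz).symm.trans (hD y hy)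
  obtain ⟨t', hxt', hvt', hct'⟩ :=
    exists_adj_reachableIn_connected_induce_pair_compl hG htx.ne' hv
  exact ⟨t', hxt', hDC.subset hvt', hct'⟩
termination_by {z | G.ReachableIn {x, s}ᶜ u z}.ncard
decreasing_by exact Set.ncard_lt_ncard hDC

end SimpleGraph

lemma KConnected.finite {V : Type*} {G : SimpleGraph V} {k : ℕ} (h : KConnected k G) :
    Finite V :=
  Nat.finite_of_card_ne_zero (by have := h.1; omega)

theorem stmt_18_general {V : Type*} (G : SimpleGraph V)
    (hconn : KConnected 2 G) (x : V) :
    ∃ s₁ s₂ : V, s₁ ≠ s₂ ∧ G.Adj x s₁ ∧ G.Adj x s₂ ∧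
      (G.induce ({x, s₁}ᶜ : Set V)).Connected ∧
      (G.induce ({x, s₂}ᶜ : Set V)).Connected := by
  have := hconn.finite
  have hG (v : V) : (G.induce ({v}ᶜ : Set V)).Connected := hconn.2 {v} (by simp)
  have hcompl (a b : V) : ({a, b}ᶜ : Set V).Nonempty :=
    Set.nonempty_compl_of_ncard_lt <| (Set.ncard_insert_le a {b}).trans_lt (by simpa using hconn.1)
  obtain ⟨s, hs⟩ : ({x}ᶜ : Set V).Nonempty :=
    Set.nonempty_compl_of_ncard_lt (by simpa using hconn.1.trans' one_lt_two)
  obtain ⟨u, hu⟩ := hcompl x s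
  obtain ⟨t₁, hxt₁, -, hct₁⟩ :=
    exists_adj_reachableIn_connected_induce_pair_compl hG (Ne.symm hs) hu
  obtain ⟨u', hu'⟩ := hcompl x t₁
  obtain ⟨t₂, hxt₂, ht₂, hct₂⟩ :=
    exists_adj_reachableIn_connected_induce_pair_compl hG hxt₁.ne hu'
  exact ⟨t₁, t₂, fun h => ht₂.right_mem (by simp [h]), hxt₁, hxt₂, hct₁, hct₂⟩

/-- if `G` is a 2-connected graph and `x` a vertex, then `x` has two
distinct neighbors `s₁, s₂` such that each `G − {x, sᵢ}` is connected. -/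
theorem stmt_18 {V : Type*} [Fintype V] (G : SimpleGraph V)
    (hconn : KConnected 2 G) (x : V) :
    ∃ s₁ s₂ : V, s₁ ≠ s₂ ∧ G.Adj x s₁ ∧ G.Adj x s₂ ∧
      (G.induce ({x, s₁}ᶜ : Set V)).Connected ∧
      (G.induce ({x, s₂}ᶜ : Set V)).Connected :=
  stmt_18_general G hconn x
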